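/- Let P, Q ∈ B_A(H). Then ω_𝔸([[P,Q],[0,0]]) ≤ √( min{‖P+Q‖_A², ‖P−Q‖_A²} + 2ω_A(PQ^{♯_A}) ). -/

import Mathlib

open ContinuousLinearMap

/-- The `A`-seminorm of a vector: `‖x‖_A = √⟨Ax, x⟩`. -/
noncomputable def vnormA {H : Type*} [NormedAddCommGroup H] [InnerProductSpace ℂ H]
    (A : H →L[ℂ] H) (x : H) : ℝ :=
  Real.sqrt (RCLike.re (inner ℂ (A x) x : ℂ))

/-- `T` is `A`-bounded, i.e. `T ∈ B_{A^{1/2}}(H)`. -/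
def ABounded {H : Type*} [NormedAddCommGroup H] [InnerProductSpace ℂ H]
    (A T : H →L[ℂ] H) : Prop :=
  ∃ c : ℝ, 0 < c ∧ ∀ x, vnormA A (T x) ≤ c * vnormA A x

/-- The `A`-operator seminorm `‖T‖_A = sup{‖Tx‖_A : ‖x‖_A = 1}`. -/
noncomputable def opNormA {H : Type*} [NormedAddCommGroup H] [InnerProductSpace ℂ H]
    (A T : H →L[ℂ] H) : ℝ :=
  sSup {c : ℝ | ∃ x : H, vnormA A x = 1 ∧ c = vnormA A (T x)}

/-- The `A`-numerical radius `ω_A(T) = sup{|⟨ATx, x⟩| : ‖x‖_A = 1}`. -/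
noncomputable def wA {H : Type*} [NormedAddCommGroup H] [InnerProductSpace ℂ H]
    (A T : H →L[ℂ] H) : ℝ :=
  sSup {c : ℝ | ∃ x : H, vnormA A x = 1 ∧ c = ‖(inner ℂ (A (T x)) x : ℂ)‖}

/-- `Ts` is the reduced (Douglas) solution of `AX = T*A`, i.e. `Ts = T^{♯_A}`. -/
def IsReducedAdjoint {H : Type*} [NormedAddCommGroup H] [InnerProductSpace ℂ H]
    [CompleteSpace H] (A T Ts : H →L[ℂ] H) : Prop :=
  A ∘L Ts = (ContinuousLinearMap.adjoint T) ∘L A ∧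
    ∀ y, Ts y ∈ closure (Set.range A)

/-- The `2 × 2` operator matrix `[[P, Q], [R, S]]` acting on `H ⊕ H` (with the `ℓ²` product
inner product). -/
noncomputable def blk {H : Type*} [NormedAddCommGroup H] [InnerProductSpace ℂ H]
    (P Q R S : H →L[ℂ] H) : WithLp 2 (H × H) →L[ℂ] WithLp 2 (H × H) :=
  letI e := (WithLp.prodContinuousLinearEquiv 2 ℂ H H)
  (e.symm.toContinuousLinearMap) ∘L
    ((P.comp (fst ℂ H H) + Q.comp (snd ℂ H H)).prod
      (R.comp (fst ℂ H H) + S.comp (snd ℂ H H))) ∘L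
    (e.toContinuousLinearMap)

/-- `𝔸 = diag(A, A)` on `H ⊕ H`. -/
noncomputable def AA {H : Type*} [NormedAddCommGroup H] [InnerProductSpace ℂ H]
    (A : H →L[ℂ] H) : WithLp 2 (H × H) →L[ℂ] WithLp 2 (H × H) :=
  blk A 0 0 A

/-! For an `𝔸`-unit vector `x = (x₁, x₂)`, `⟨𝔸 [[P, Q], [0, 0]] x, x⟩ = ⟨A(Px₁ + Qx₂), x₁⟩` is the
conjugate of `⟨A P^♯x₁, x₁⟩ + ⟨A Q^♯x₁, x₂⟩`, so by Cauchy–Schwarz its square is at most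
`‖P^♯x₁‖_A² + ‖Q^♯x₁‖_A²`. This equals `‖(P + Q)^♯x₁‖_A² - 2 Re⟨A PQ^♯x₁, x₁⟩`, and
`‖(P + Q)^♯‖_A ≤ ‖P + Q‖_A` gives the bound with `P + Q`; replacing `(Q, x₂)` by `(-Q, -x₂)` gives
the one with `P - Q`.

`‖·‖_A` and `ω_A` are suprema over the unbounded set `{‖x‖_A = 1}`, so the argument needs them to
be finite (a junk `sSup` would be `0`). For operators with an `A`-adjoint this follows from the
power trick: for `A`-selfadjoint `G`, `‖Gx‖_A² ≤ ‖G²x‖_A ‖x‖_A`, and iterating along powers `2ᵏ`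
yields `‖Gx‖_A ≤ ‖G‖ ‖x‖_A`. -/

theorem le_of_forall_pow_two_pow_le {r g C : ℝ} (hg : 0 ≤ g)
    (h : ∀ k : ℕ, r ^ 2 ^ k ≤ C * g ^ 2 ^ k) : r ≤ g := by
  by_contra! hgr
  rcases hg.eq_or_lt with rfl | hg
  · have h0 := h 0
    rw [pow_zero, pow_one, pow_one, mul_zero] at h0
    exact h0.not_gt hgr
  · have hr : 1 < r / g := (one_lt_div hg).2 hgr
    obtain ⟨M, hM⟩ := pow_unbounded_of_one_lt C hr
    have hC : (r / g) ^ 2 ^ M ≤ C := by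
      rw [div_pow, div_le_iff₀ (pow_pos hg _)]
      exact h M
    exact (hM.trans_le (pow_le_pow_right₀ hr.le Nat.lt_two_pow_self.le)).not_ge hC

theorem le_mul_of_sq_le_succ_mul {a : ℕ → ℝ} {n g C : ℝ} (ha : ∀ k, 0 ≤ a k) (hn : 0 ≤ n)
    (hg : 0 ≤ g) (hsq : ∀ k, a k ^ 2 ≤ a (k + 1) * n) (hbound : ∀ k, a k ≤ C * g ^ 2 ^ k) :
    a 0 ≤ g * n := by
  rcases hn.eq_or_lt with rfl | hn
  · nlinarith [hsq 0, ha 0]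
  · have hiter : ∀ k, (a 0 / n) ^ 2 ^ k ≤ a k / n := by
      intro k
      induction k with
      | zero => simp
      | succ k ih =>
        calc (a 0 / n) ^ 2 ^ (k + 1) = ((a 0 / n) ^ 2 ^ k) ^ 2 := by rw [pow_succ, pow_mul]
          _ ≤ (a k / n) ^ 2 := by gcongr; exact pow_nonneg (div_nonneg (ha 0) hn.le) _
          _ ≤ a (k + 1) / n := by
            rw [div_pow, sq n, ← div_div, div_le_div_iff_of_pos_right hn]
            exact div_le_of_le_mul₀ hn.le (ha _) (hsq k)
    have hratio : a 0 / n ≤ g := by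
      refine le_of_forall_pow_two_pow_le (C := C / n) hg fun k => (hiter k).trans ?_
      rw [div_mul_eq_mul_div, div_le_div_iff_of_pos_right hn]
      exact hbound k
    rwa [div_le_iff₀ hn] at hratio

section Seminorm

variable {E : Type*} [NormedAddCommGroup E] [InnerProductSpace ℂ E] {A : E →L[ℂ] E}

theorem vnormA_nonneg (x : E) : 0 ≤ vnormA A x := Real.sqrt_nonneg _

theorem vnormA_sq (hA : A.IsPositive) (x : E) :
    vnormA A x ^ 2 = RCLike.re (inner ℂ (A x) x) :=
  Real.sq_sqrt (hA.re_inner_nonneg_left x)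

theorem vnormA_smul (c : ℂ) (x : E) : vnormA A (c • x) = ‖c‖ * vnormA A x := by
  have h : inner ℂ (A (c • x)) (c • x) = ((‖c‖ ^ 2 : ℝ) : ℂ) * inner ℂ (A x) x := by
    rw [map_smul, inner_smul_left, inner_smul_right, ← mul_assoc, RCLike.conj_mul]
    norm_cast
  rw [vnormA, vnormA, h, RCLike.re_to_complex, RCLike.re_to_complex, Complex.re_ofReal_mul,
    Real.sqrt_mul (sq_nonneg _), Real.sqrt_sq (norm_nonneg _)]

theorem vnormA_neg (x : E) : vnormA A (-x) = vnormA A x := by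
  simp only [vnormA, map_neg, inner_neg_neg]

theorem vnormA_le_sqrt_norm_mul_norm (x : E) : vnormA A x ≤ √‖A‖ * ‖x‖ := by
  rw [← Real.sqrt_sq (norm_nonneg x), ← Real.sqrt_mul (norm_nonneg A)]
  refine Real.sqrt_le_sqrt ((RCLike.re_le_norm _).trans ((norm_inner_le_norm _ _).trans ?_))
  rw [sq, ← mul_assoc]
  exact mul_le_mul_of_nonneg_right (A.le_opNorm x) (norm_nonneg x)

noncomputable abbrev ContinuousLinearMap.IsPositive.preInnerProductCore (hA : A.IsPositive) :
    PreInnerProductSpace.Core ℂ E where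
  inner x y := inner ℂ (A x) y
  conj_inner_symm x y := by
    simp only [hA.inner_left_eq_inner_right y, inner_conj_symm]
  re_inner_nonneg := hA.re_inner_nonneg_left
  add_left x y z := by simp only [map_add, inner_add_left]
  smul_left x y r := by simp only [map_smul, inner_smul_left]

theorem norm_inner_map_le_vnormA_mul (hA : A.IsPositive) (x y : E) :
    ‖inner ℂ (A x) y‖ ≤ vnormA A x * vnormA A y := by
  have hcs := @InnerProductSpace.Core.inner_mul_inner_self_le ℂ E _ _ _
    hA.preInnerProductCore x y
  change ‖inner ℂ (A x) y‖ * ‖inner ℂ (A y) x‖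
    ≤ RCLike.re (inner ℂ (A x) x) * RCLike.re (inner ℂ (A y) y) at hcs
  rw [hA.inner_left_eq_inner_right y, norm_inner_symm y, ← vnormA_sq hA, ← vnormA_sq hA,
    ← mul_pow, ← sq] at hcs
  exact le_of_sq_le_sq hcs (mul_nonneg (vnormA_nonneg x) (vnormA_nonneg y))

theorem le_sSup_vnormA_eq_one_mul {g : E → ℝ} {n : ℕ} (hn : n ≠ 0)
    (hg : ∀ (c : ℂ) x, g (c • x) = ‖c‖ ^ n * g x) {C : ℝ} (hC : ∀ x, g x ≤ C * vnormA A x ^ n)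
    (x : E) : g x ≤ sSup {c | ∃ y, vnormA A y = 1 ∧ c = g y} * vnormA A x ^ n := by
  rcases (vnormA_nonneg x).eq_or_lt with h0 | hpos
  · have h := hC x
    rw [← h0, zero_pow hn, mul_zero] at h ⊢
    exact h
  · have hbdd : BddAbove {c | ∃ y, vnormA A y = 1 ∧ c = g y} := by
      refine ⟨C, ?_⟩
      rintro _ ⟨y, hy, rfl⟩
      simpa [hy] using hC y
    have hnorm : ‖((vnormA A x : ℂ))⁻¹‖ = (vnormA A x)⁻¹ := by
      rw [norm_inv, Complex.norm_real, Real.norm_of_nonneg hpos.le]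
    have hunit : vnormA A (((vnormA A x : ℂ))⁻¹ • x) = 1 := by
      rw [vnormA_smul, hnorm, inv_mul_cancel₀ hpos.ne']
    have hle := le_csSup hbdd ⟨_, hunit, rfl⟩
    rwa [hg, hnorm, inv_pow, inv_mul_le_iff₀ (pow_pos hpos n), mul_comm] at hle

theorem ABounded.vnormA_apply_le_opNormA {T : E →L[ℂ] E} (hT : ABounded A T) (x : E) :
    vnormA A (T x) ≤ opNormA A T * vnormA A x := by
  obtain ⟨c, -, hc⟩ := hT
  have h := le_sSup_vnormA_eq_one_mul one_ne_zero (g := fun y => vnormA A (T y))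
    (fun c y => by simp only [map_smul, vnormA_smul, pow_one]) (C := c)
    (by simpa only [pow_one] using hc) x
  rwa [pow_one] at h

theorem ABounded.norm_inner_le_wA (hA : A.IsPositive) {T : E →L[ℂ] E} (hT : ABounded A T)
    (x : E) : ‖inner ℂ (A (T x)) x‖ ≤ wA A T * vnormA A x ^ 2 := by
  obtain ⟨c, -, hc⟩ := hT
  refine le_sSup_vnormA_eq_one_mul two_ne_zero (g := fun y => ‖inner ℂ (A (T y)) y‖)
    (fun c y => by simp only [map_smul, inner_smul_left, inner_smul_right, norm_mul,
      RCLike.norm_conj]; ring) (C := c) (fun y => ?_) x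
  calc ‖inner ℂ (A (T y)) y‖ ≤ vnormA A (T y) * vnormA A y := norm_inner_map_le_vnormA_mul hA _ _
    _ ≤ c * vnormA A y * vnormA A y := by gcongr; exacts [vnormA_nonneg y, hc y]
    _ = c * vnormA A y ^ 2 := by ring

theorem opNormA_nonneg (T : E →L[ℂ] E) : 0 ≤ opNormA A T :=
  Real.sSup_nonneg <| by rintro _ ⟨x, -, rfl⟩; exact vnormA_nonneg _

theorem wA_nonneg (T : E →L[ℂ] E) : 0 ≤ wA A T :=
  Real.sSup_nonneg <| by rintro _ ⟨x, -, rfl⟩; exact norm_nonneg _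

theorem wA_neg (T : E →L[ℂ] E) : wA A (-T) = wA A T := by
  simp only [wA, neg_apply, map_neg, inner_neg_left, norm_neg]

end Seminorm

section AAdjoint

variable {E : Type*} [NormedAddCommGroup E] [InnerProductSpace ℂ E] [CompleteSpace E]
  {A G T S : E →L[ℂ] E}

/-- Any solution `S` of `AX = T*A`, not only the reduced one `T^{♯_A}`. -/
def IsAAdjoint (A T S : E →L[ℂ] E) : Prop :=
  A ∘L S = adjoint T ∘L A

namespace IsAAdjoint

theorem inner_map_apply_right (h : IsAAdjoint A T S) (u y : E) :
    inner ℂ (A u) (T y) = inner ℂ (A (S u)) y := by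
  rw [← adjoint_inner_left, ← comp_apply (adjoint T) A, ← h, comp_apply]

theorem symm (hA : A.IsPositive) (h : IsAAdjoint A T S) : IsAAdjoint A S T := by
  have h' := congrArg adjoint h
  rw [adjoint_comp, adjoint_comp, adjoint_adjoint, hA.isSelfAdjoint.adjoint_eq] at h'
  exact h'.symm

theorem inner_map_apply_left (hA : A.IsPositive) (h : IsAAdjoint A T S) (u y : E) :
    inner ℂ (A (T u)) y = starRingEnd ℂ (inner ℂ (A (S y)) u) := by
  rw [hA.inner_left_eq_inner_right, ← inner_conj_symm, h.inner_map_apply_right]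

theorem add {T' S' : E →L[ℂ] E} (h : IsAAdjoint A T S) (h' : IsAAdjoint A T' S') :
    IsAAdjoint A (T + T') (S + S') := by
  rw [IsAAdjoint, comp_add, h, h', map_add, add_comp]

theorem neg (h : IsAAdjoint A T S) : IsAAdjoint A (-T) (-S) := by
  rw [IsAAdjoint, comp_neg, h, map_neg, neg_comp]

theorem comp {T' S' : E →L[ℂ] E} (h : IsAAdjoint A T S) (h' : IsAAdjoint A T' S') :
    IsAAdjoint A (T ∘L T') (S' ∘L S) := by
  rw [IsAAdjoint, ← comp_assoc, h', comp_assoc, h, ← comp_assoc, adjoint_comp]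

theorem pow (hG : IsAAdjoint A G G) (m : ℕ) : IsAAdjoint A (G ^ m) (G ^ m) := by
  induction m with
  | zero => rw [IsAAdjoint, pow_zero, ← star_eq_adjoint, star_one]; rfl
  | succ m ih =>
    have h := ih.comp hG
    rwa [← mul_def, ← mul_def, ← pow_succ, ← pow_succ'] at h

theorem vnormA_apply_sq_le (hA : A.IsPositive) (hG : IsAAdjoint A G G) (x : E) :
    vnormA A (G x) ^ 2 ≤ vnormA A (G (G x)) * vnormA A x := by
  rw [vnormA_sq hA, hG.inner_map_apply_right]
  exact (RCLike.re_le_norm _).trans (norm_inner_map_le_vnormA_mul hA _ _)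

theorem vnormA_apply_le_norm_mul (hA : A.IsPositive) (hG : IsAAdjoint A G G) (x : E) :
    vnormA A (G x) ≤ ‖G‖ * vnormA A x := by
  have h := le_mul_of_sq_le_succ_mul (a := fun k => vnormA A ((G ^ 2 ^ k) x))
    (C := √‖A‖ * ‖x‖) (fun _ => vnormA_nonneg _) (vnormA_nonneg (A := A) x) (norm_nonneg G)
    (fun k => ?_) (fun k => ?_)
  · simpa only [pow_zero, pow_one] using h
  · have hk := (hG.pow (2 ^ k)).vnormA_apply_sq_le hA x
    rwa [← mul_apply_eq_comp, ← pow_add, ← two_mul, ← pow_succ'] at hk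
  · calc vnormA A ((G ^ 2 ^ k) x) ≤ √‖A‖ * ‖(G ^ 2 ^ k) x‖ := vnormA_le_sqrt_norm_mul_norm _
      _ ≤ √‖A‖ * (‖G‖ ^ 2 ^ k * ‖x‖) := by
        gcongr
        exact ((G ^ 2 ^ k).le_opNorm x).trans
          (by gcongr; exact norm_pow_le' G (by positivity))
      _ = √‖A‖ * ‖x‖ * ‖G‖ ^ 2 ^ k := by ring

theorem aBounded (hA : A.IsPositive) (h : IsAAdjoint A T S) : ABounded A T := by
  refine ⟨√‖S ∘L T‖ + 1, by positivity, fun y => ?_⟩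
  have hsq : vnormA A (T y) ^ 2 ≤ (√‖S ∘L T‖ * vnormA A y) ^ 2 := by
    rw [mul_pow, Real.sq_sqrt (norm_nonneg _), vnormA_sq hA, h.inner_map_apply_right]
    calc RCLike.re (inner ℂ (A (S (T y))) y) ≤ vnormA A ((S ∘L T) y) * vnormA A y :=
          (RCLike.re_le_norm _).trans (norm_inner_map_le_vnormA_mul hA _ _)
      _ ≤ ‖S ∘L T‖ * vnormA A y * vnormA A y := by
          gcongr
          · exact vnormA_nonneg y
          · exact ((h.symm hA).comp h).vnormA_apply_le_norm_mul hA y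
      _ = ‖S ∘L T‖ * vnormA A y ^ 2 := by ring
  calc vnormA A (T y) ≤ √‖S ∘L T‖ * vnormA A y :=
        le_of_sq_le_sq hsq (mul_nonneg (Real.sqrt_nonneg _) (vnormA_nonneg y))
    _ ≤ (√‖S ∘L T‖ + 1) * vnormA A y := by gcongr; exacts [vnormA_nonneg y, by linarith]

theorem vnormA_apply_le_opNormA_mul (hA : A.IsPositive) (h : IsAAdjoint A T S) (x : E) :
    vnormA A (S x) ≤ opNormA A T * vnormA A x := by
  have hsq : vnormA A (S x) * vnormA A (S x) ≤ opNormA A T * vnormA A x * vnormA A (S x) := by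
    rw [← sq, vnormA_sq hA, (h.symm hA).inner_map_apply_right]
    calc RCLike.re (inner ℂ (A (T (S x))) x) ≤ vnormA A (T (S x)) * vnormA A x :=
          (RCLike.re_le_norm _).trans (norm_inner_map_le_vnormA_mul hA _ _)
      _ ≤ opNormA A T * vnormA A (S x) * vnormA A x := by
          gcongr
          · exact vnormA_nonneg x
          · exact (h.aBounded hA).vnormA_apply_le_opNormA _
      _ = opNormA A T * vnormA A x * vnormA A (S x) := by ring
  rcases (vnormA_nonneg (S x)).eq_or_lt with h0 | hpos
  · rw [← h0]
    exact mul_nonneg (opNormA_nonneg T) (vnormA_nonneg x)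
  · exact le_of_mul_le_mul_right hsq hpos

end IsAAdjoint

end AAdjoint

section Estimate

variable {E : Type*} [NormedAddCommGroup E] [InnerProductSpace ℂ E] [CompleteSpace E]
  {A P Q Ps Qs : E →L[ℂ] E}

theorem re_inner_map_adjoint_eq (hA : A.IsPositive) (hP : IsAAdjoint A P Ps) (u y : E) :
    RCLike.re (inner ℂ (A (Ps y)) u) = RCLike.re (inner ℂ (A (P u)) y) := by
  rw [hP.inner_map_apply_left hA, RCLike.conj_re]

theorem vnormA_adjoint_sq_add_sq_le (hA : A.IsPositive) (hP : IsAAdjoint A P Ps)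
    (hQ : IsAAdjoint A Q Qs) (y : E) :
    vnormA A (Ps y) ^ 2 + vnormA A (Qs y) ^ 2
      ≤ (opNormA A (P + Q) ^ 2 + 2 * wA A (P ∘L Qs)) * vnormA A y ^ 2 := by
  set z : ℂ := inner ℂ (A ((P ∘L Qs) y)) y
  have hexpand : vnormA A ((Ps + Qs) y) ^ 2
      = vnormA A (Ps y) ^ 2 + vnormA A (Qs y) ^ 2 + 2 * RCLike.re z := by
    have h₁ := re_inner_map_adjoint_eq hA hP (Qs y) y
    have h₂ : RCLike.re (inner ℂ (A (Qs y)) (Ps y)) = RCLike.re (inner ℂ (A (Ps y)) (Qs y)) := by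
      rw [hA.inner_left_eq_inner_right, ← inner_conj_symm, RCLike.conj_re]
    simp only [vnormA_sq hA, add_apply, map_add, inner_add_left, inner_add_right] at h₁ h₂ ⊢
    simp only [z, comp_apply]
    linarith
  have hsum := (hP.add hQ).vnormA_apply_le_opNormA_mul hA y
  have hcross : ‖z‖ ≤ wA A (P ∘L Qs) * vnormA A y ^ 2 :=
    ((hP.comp (hQ.symm hA)).aBounded hA).norm_inner_le_wA hA y
  have hsq := pow_le_pow_left₀ (vnormA_nonneg _) hsum 2
  have hre : -RCLike.re z ≤ ‖z‖ := (neg_le_abs _).trans (RCLike.abs_re_le_norm z)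
  rw [mul_pow] at hsq
  linarith

theorem norm_inner_map_add_sq_le (hA : A.IsPositive) (hP : IsAAdjoint A P Ps)
    (hQ : IsAAdjoint A Q Qs) {x y : E} (hxy : vnormA A x ^ 2 + vnormA A y ^ 2 = 1) :
    ‖inner ℂ (A (P x + Q y)) x‖ ^ 2 ≤ opNormA A (P + Q) ^ 2 + 2 * wA A (P ∘L Qs) := by
  have hK : 0 ≤ opNormA A (P + Q) ^ 2 + 2 * wA A (P ∘L Qs) := by
    have := wA_nonneg (A := A) (P ∘L Qs)
    positivity
  have hcs : ‖inner ℂ (A (P x + Q y)) x‖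
      ≤ vnormA A (Ps x) * vnormA A x + vnormA A (Qs x) * vnormA A y := by
    rw [map_add, inner_add_left, hP.inner_map_apply_left hA, hQ.inner_map_apply_left hA,
      ← map_add, RCLike.norm_conj]
    exact (norm_add_le _ _).trans (add_le_add (norm_inner_map_le_vnormA_mul hA _ _)
      (norm_inner_map_le_vnormA_mul hA _ _))
  have hx : vnormA A x ^ 2 ≤ 1 := by nlinarith [sq_nonneg (vnormA A y)]
  calc ‖inner ℂ (A (P x + Q y)) x‖ ^ 2
      ≤ (vnormA A (Ps x) * vnormA A x + vnormA A (Qs x) * vnormA A y) ^ 2 :=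
        pow_le_pow_left₀ (norm_nonneg _) hcs 2
    _ ≤ (vnormA A (Ps x) ^ 2 + vnormA A (Qs x) ^ 2) * (vnormA A x ^ 2 + vnormA A y ^ 2) := by
        nlinarith [sq_nonneg (vnormA A (Ps x) * vnormA A y - vnormA A (Qs x) * vnormA A x)]
    _ ≤ (opNormA A (P + Q) ^ 2 + 2 * wA A (P ∘L Qs)) * vnormA A x ^ 2 := by
        rw [hxy, mul_one]
        exact vnormA_adjoint_sq_add_sq_le hA hP hQ x
    _ ≤ opNormA A (P + Q) ^ 2 + 2 * wA A (P ∘L Qs) := mul_le_of_le_one_right hK hx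

end Estimate

section Block

variable {H : Type*} [NormedAddCommGroup H] [InnerProductSpace ℂ H] {A : H →L[ℂ] H}

theorem inner_AA_apply (u v : WithLp 2 (H × H)) :
    inner ℂ (AA A u) v = inner ℂ (A u.fst) v.fst + inner ℂ (A u.snd) v.snd := by
  rw [WithLp.prod_inner_apply]
  simp [AA, blk]

theorem vnormA_AA_sq (hA : A.IsPositive) (x : WithLp 2 (H × H)) :
    vnormA (AA A) x ^ 2 = vnormA A x.fst ^ 2 + vnormA A x.snd ^ 2 := by
  rw [vnormA_sq hA, vnormA_sq hA, vnormA, inner_AA_apply, map_add]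
  exact Real.sq_sqrt (add_nonneg (hA.re_inner_nonneg_left _) (hA.re_inner_nonneg_left _))

theorem inner_AA_blk_apply (P Q : H →L[ℂ] H) (x : WithLp 2 (H × H)) :
    inner ℂ (AA A (blk P Q 0 0 x)) x = inner ℂ (A (P x.fst + Q x.snd)) x.fst := by
  rw [inner_AA_apply]
  simp [blk]

end Block

theorem stmt11 {H : Type*} [NormedAddCommGroup H] [InnerProductSpace ℂ H] [CompleteSpace H]
    (A : H →L[ℂ] H) (hA : A.IsPositive)
    (P Q Qs : H →L[ℂ] H) (hP : ∃ Ps, IsReducedAdjoint A P Ps)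
    (hQ : IsReducedAdjoint A Q Qs) :
    wA (AA A) (blk P Q 0 0) ≤
      Real.sqrt (min ((opNormA A (P + Q)) ^ 2) ((opNormA A (P - Q)) ^ 2) +
        2 * wA A (P ∘L Qs)) := by
  obtain ⟨Ps, hPs, -⟩ := hP
  have hQs : IsAAdjoint A Q Qs := hQ.1
  refine Real.sSup_le ?_ (Real.sqrt_nonneg _)
  rintro _ ⟨x, hx, rfl⟩
  have hunit : vnormA A x.fst ^ 2 + vnormA A x.snd ^ 2 = 1 := by
    rw [← vnormA_AA_sq hA, hx, one_pow]
  have hplus := norm_inner_map_add_sq_le hA hPs hQs hunit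
  have hminus := norm_inner_map_add_sq_le hA hPs hQs.neg (x := x.fst) (y := -x.snd)
    (by rwa [vnormA_neg])
  rw [neg_apply, map_neg, neg_neg, ← sub_eq_add_neg, comp_neg, wA_neg] at hminus
  rw [inner_AA_blk_apply, ← min_add_add_right]
  exact Real.le_sqrt_of_sq_le (le_min hplus hminus)
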